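/- In the CHSH_n game where Alice's response to question A = 0 is fixed to X = 0, the maximum winning probability of any non-signaling strategy is 1 − 1/(2n), equal to the classical value of CHSH_n. -/

import Mathlib

/-- The probability of satisfying the CHSH_n predicate on question pair `(a,b)`:
accept iff `x ≠ y` when `a = b = n-1`, and iff `x = y` otherwise. -/
noncomputable def chshnPairProb (n : ℕ) (p : Fin n → Fin n → Bool → Bool → ℝ)
    (a b : Fin n) : ℝ :=
  if a.val = n - 1 ∧ b.val = n - 1 then
    ∑ x : Bool, ∑ y : Bool, (if x ≠ y then p a b x y else 0)
  else
    ∑ x : Bool, ∑ y : Bool, (if x = y then p a b x y else 0)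

/-- The winning probability in the CHSH_n game (questions `(a,a)` and `(a,a+1)`,
each with probability `1/(2n)`) for the strategy `p(x,y|a,b)`. -/
noncomputable def chshnWinProb (n : ℕ) [NeZero n]
    (p : Fin n → Fin n → Bool → Bool → ℝ) : ℝ :=
  (1 / (2 * n)) * ∑ a : Fin n, (chshnPairProb n p a a + chshnPairProb n p a (a + 1))

/-! Let `α a` and `β b` be the probabilities that Alice, resp. Bob, answers `0` on questions `a`,
`b`; by non-signaling they do not depend on the other player's question. On a pair `(a, b)` the
predicate `X = Y` is satisfied with probability at most `1 - |α a - β b|`, and `X ≠ Y` with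
probability at most `1 - |α a + β b - 1|`. The `2n` question pairs form a single cycle
`α 0 — β 0 — α (n-1) — β (n-1) — α (n-2) — ⋯ — β 1 — α 0` in which only the edge `(n-1, n-1)`
compares `α` with `1 - β`, so by the triangle inequality the deficits add up to at least
`|2 α 0 - 1|`, which is `1` once Alice's answer to question `0` is fixed. The deterministic
strategy in which both players always answer `0` loses only on `(n-1, n-1)`. -/

open Finset

namespace Fin

theorem add_one_eq_zero_iff {n : ℕ} [NeZero n] {a : Fin n} : a + 1 = 0 ↔ a.val = n - 1 := by
  rw [Fin.ext_iff, val_add, val_one', Nat.add_mod_mod, val_zero]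
  rcases Nat.lt_or_ge (a.val + 1) n with h | h
  · rw [Nat.mod_eq_of_lt h]; omega
  · rw [show a.val + 1 = n by omega, Nat.mod_self]; omega

theorem one_ne_zero_of_two_le {n : ℕ} [NeZero n] (hn : 2 ≤ n) : (1 : Fin n) ≠ 0 := by
  rw [Ne, Fin.ext_iff, val_one', val_zero, Nat.mod_eq_of_lt hn]
  exact one_ne_zero

theorem not_val_eq_and_val_add_one_eq {n : ℕ} [NeZero n] (hn : 2 ≤ n) (a : Fin n) (k : ℕ) :
    ¬(a.val = k ∧ (a + 1).val = k) := fun h =>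
  add_ne_left.mpr (one_ne_zero_of_two_le hn) (Fin.ext (h.2.trans h.1.symm))

end Fin

theorem Fintype.sum_sub_comp_add_right_eq_zero {G M : Type*} [AddGroup G] [Fintype G]
    [AddCommGroup M] (f : G → M) (g : G) : ∑ a, (f a - f (a + g)) = 0 := by
  rw [Finset.sum_sub_distrib, Fintype.sum_equiv (Equiv.addRight g) (fun a => f (a + g)) f
    fun _ => rfl, sub_self]

section BoolDistribution

variable {q : Bool → Bool → ℝ}

theorem sum_ite_eq_le_one_sub_abs (hq0 : ∀ x y, 0 ≤ q x y) (hq1 : ∑ x, ∑ y, q x y = 1) :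
    ∑ x, ∑ y, (if x = y then q x y else 0) ≤ 1 - |∑ y, q false y - ∑ x, q x false| := by
  simp only [Fintype.sum_bool, ↓reduceIte, Bool.false_eq_true, Bool.true_eq_false, add_zero,
    zero_add] at hq1 ⊢
  rw [le_sub_iff_add_le, ← le_sub_iff_add_le', abs_le]
  constructor <;> linarith [hq0 true false, hq0 false true]

theorem sum_ite_ne_le_one_sub_abs (hq0 : ∀ x y, 0 ≤ q x y) (hq1 : ∑ x, ∑ y, q x y = 1) :
    ∑ x, ∑ y, (if x ≠ y then q x y else 0) ≤ 1 - |∑ y, q false y + ∑ x, q x false - 1| := by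
  simp only [Fintype.sum_bool, ne_eq, not_true_eq_false, not_false_eq_true, ↓reduceIte,
    Bool.false_eq_true, Bool.true_eq_false, add_zero, zero_add] at hq1 ⊢
  rw [le_sub_iff_add_le, ← le_sub_iff_add_le', abs_le]
  constructor <;> linarith [hq0 true true, hq0 false false]

end BoolDistribution

section UpperBound

variable {n : ℕ} {p : Fin n → Fin n → Bool → Bool → ℝ} {α β : Fin n → ℝ}

theorem chshnPairProb_le_of_not_both_last {a b : Fin n} (hp0 : ∀ x y, 0 ≤ p a b x y)
    (hp1 : ∑ x, ∑ y, p a b x y = 1) (hα : ∑ y, p a b false y = α a)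
    (hβ : ∑ x, p a b x false = β b) (hab : ¬(a.val = n - 1 ∧ b.val = n - 1)) :
    chshnPairProb n p a b ≤ 1 - |α a - β b| := by
  rw [chshnPairProb, if_neg hab, ← hα, ← hβ]
  exact sum_ite_eq_le_one_sub_abs hp0 hp1

theorem chshnPairProb_self_le_of_last {a : Fin n} (hp0 : ∀ x y, 0 ≤ p a a x y)
    (hp1 : ∑ x, ∑ y, p a a x y = 1) (hα : ∑ y, p a a false y = α a)
    (hβ : ∑ x, p a a x false = β a) (ha : a.val = n - 1) :
    chshnPairProb n p a a ≤ 1 - |α a + β a - 1| := by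
  rw [chshnPairProb, if_pos ⟨ha, ha⟩, ← hα, ← hβ]
  exact sum_ite_ne_le_one_sub_abs hp0 hp1

/- `Function.update β 0 (1 - β 0)` is Bob's marginal with his answer to question `0` flipped;
in this potential the bounds telescope around the cycle of questions, the flip absorbing the pair
`(n-1, n-1)` and `α 0 = 1` paying the extra `1` at `a = 0`. -/
theorem chshnPairProb_self_add_next_le [NeZero n] (hn : 2 ≤ n)
    (hp0 : ∀ a b x y, 0 ≤ p a b x y) (hp1 : ∀ a b, ∑ x, ∑ y, p a b x y = 1)
    (hα : ∀ a b, ∑ y, p a b false y = α a) (hβ : ∀ a b, ∑ x, p a b x false = β b)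
    (hα0 : α 0 = 1) (a : Fin n) :
    chshnPairProb n p a a + chshnPairProb n p a (a + 1) ≤
      2 - (Function.update β 0 (1 - β 0) a - Function.update β 0 (1 - β 0) (a + 1)) -
        if a = 0 then 1 else 0 := by
  have next := chshnPairProb_le_of_not_both_last (hp0 a (a + 1)) (hp1 a (a + 1)) (hα a (a + 1))
    (hβ a (a + 1)) (Fin.not_val_eq_and_val_add_one_eq hn a (n - 1))
  rcases eq_or_ne a 0 with rfl | ha0
  · have same := chshnPairProb_le_of_not_both_last (hp0 0 0) (hp1 0 0) (hα 0 0) (hβ 0 0)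
      fun h => by rw [Fin.val_zero] at h; omega
    rw [zero_add, hα0] at next
    rw [hα0] at same
    rw [zero_add, Function.update_self, if_pos rfl,
      Function.update_of_ne (Fin.one_ne_zero_of_two_le hn)]
    linarith [le_abs_self (1 - β 0), le_abs_self (1 - β 1)]
  rw [Function.update_of_ne ha0, if_neg ha0]
  by_cases hlast : a.val = n - 1
  · have same := chshnPairProb_self_le_of_last (hp0 a a) (hp1 a a) (hα a a) (hβ a a) hlast
    rw [Fin.add_one_eq_zero_iff.mpr hlast] at next ⊢
    rw [Function.update_self]
    linarith [le_abs_self (α a + β a - 1), neg_abs_le (α a - β 0)]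
  · have same := chshnPairProb_le_of_not_both_last (hp0 a a) (hp1 a a) (hα a a) (hβ a a)
      fun h => hlast h.1
    rw [Function.update_of_ne (mt Fin.add_one_eq_zero_iff.mp hlast)]
    linarith [neg_abs_le (α a - β a), le_abs_self (α a - β (a + 1))]

theorem chshnWinProb_le_of_alice_fixed [NeZero n] (hn : 2 ≤ n)
    (hp0 : ∀ a b x y, 0 ≤ p a b x y) (hp1 : ∀ a b, ∑ x, ∑ y, p a b x y = 1)
    (hα : ∀ a b, ∑ y, p a b false y = α a) (hβ : ∀ a b, ∑ x, p a b x false = β b)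
    (hα0 : α 0 = 1) :
    chshnWinProb n p ≤ 1 - 1 / (2 * n) := by
  set φ := Function.update β 0 (1 - β 0)
  have hsum : ∑ a : Fin n, (chshnPairProb n p a a + chshnPairProb n p a (a + 1)) ≤ 2 * n - 1 :=
    calc _ ≤ ∑ a : Fin n, (2 - (φ a - φ (a + 1)) - if a = 0 then 1 else 0) :=
          sum_le_sum fun a _ => chshnPairProb_self_add_next_le hn hp0 hp1 hα hβ hα0 a
      _ = 2 * n - 1 := by
          rw [sum_sub_distrib, sum_sub_distrib, Fintype.sum_sub_comp_add_right_eq_zero]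
          simp [mul_comm]
  have hn0 : (0 : ℝ) < n := by positivity
  calc chshnWinProb n p ≤ 1 / (2 * n) * (2 * n - 1) := by
        rw [chshnWinProb]; gcongr
    _ = 1 - 1 / (2 * n) := by field_simp

end UpperBound

def alwaysFalse (n : ℕ) : Fin n → Fin n → Bool → Bool → ℝ :=
  fun _ _ x y => if x = false ∧ y = false then 1 else 0

theorem chshnPairProb_alwaysFalse {n : ℕ} (a b : Fin n) :
    chshnPairProb n (alwaysFalse n) a b = if a.val = n - 1 ∧ b.val = n - 1 then 0 else 1 := by
  unfold chshnPairProb alwaysFalse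
  split_ifs <;> simp

theorem chshnWinProb_alwaysFalse {n : ℕ} [NeZero n] (hn : 2 ≤ n) :
    chshnWinProb n (alwaysFalse n) = 1 - 1 / (2 * n) := by
  have hround (a : Fin n) : chshnPairProb n (alwaysFalse n) a a +
      chshnPairProb n (alwaysFalse n) a (a + 1) = 2 - if a + 1 = 0 then 1 else 0 := by
    simp only [chshnPairProb_alwaysFalse, if_neg (Fin.not_val_eq_and_val_add_one_eq hn a _),
      and_self, Fin.add_one_eq_zero_iff]
    split_ifs <;> norm_num
  have hlast : ∑ a : Fin n, (if a + 1 = 0 then (1 : ℝ) else 0) = 1 := by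
    rw [Fintype.sum_equiv (Equiv.addRight 1) (fun a : Fin n => if a + 1 = 0 then (1 : ℝ) else 0)
      (fun a => if a = 0 then 1 else 0) fun _ => rfl, sum_ite_eq' univ 0, if_pos (mem_univ _)]
  have hn0 : (0 : ℝ) < n := by positivity
  rw [chshnWinProb, Fintype.sum_congr _ _ hround, sum_sub_distrib, hlast, sum_const, card_univ,
    Fintype.card_fin, nsmul_eq_mul]
  field_simp

theorem chshn_nonsignaling_fixed_response (n : ℕ) (hn : 2 ≤ n) [NeZero n] :
    (∀ p : Fin n → Fin n → Bool → Bool → ℝ,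
      (∀ a b x y, 0 ≤ p a b x y) →
      (∀ a b, ∑ x : Bool, ∑ y : Bool, p a b x y = 1) →
      (∀ a b b' x, ∑ y : Bool, p a b x y = ∑ y : Bool, p a b' x y) →
      (∀ a a' b y, ∑ x : Bool, p a b x y = ∑ x : Bool, p a' b x y) →
      (∀ b, ∑ y : Bool, p 0 b false y = 1) →
      chshnWinProb n p ≤ 1 - 1 / (2 * n)) ∧
    (∃ p : Fin n → Fin n → Bool → Bool → ℝ,
      (∀ a b x y, 0 ≤ p a b x y) ∧
      (∀ a b, ∑ x : Bool, ∑ y : Bool, p a b x y = 1) ∧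
      (∀ a b b' x, ∑ y : Bool, p a b x y = ∑ y : Bool, p a b' x y) ∧
      (∀ a a' b y, ∑ x : Bool, p a b x y = ∑ x : Bool, p a' b x y) ∧
      (∀ b, ∑ y : Bool, p 0 b false y = 1) ∧
      chshnWinProb n p = 1 - 1 / (2 * n)) := by
  refine ⟨fun p hp0 hp1 hAlice hBob hfix => ?_,
    alwaysFalse n, ?_, ?_, fun _ _ _ _ => rfl, fun _ _ _ _ => rfl, ?_, chshnWinProb_alwaysFalse hn⟩
  · exact chshnWinProb_le_of_alice_fixed (α := fun a => ∑ y, p a a false y)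
      (β := fun b => ∑ x, p b b x false) hn hp0 hp1 (fun a b => hAlice a b a false)
      (fun a b => hBob a b b false) (hfix 0)
  · intro a b x y
    unfold alwaysFalse
    split_ifs <;> norm_num
  · intro a b
    simp only [alwaysFalse, Fintype.sum_bool]
    norm_num
  · intro b
    simp [alwaysFalse]
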